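/- Let L ∈ ℝ^{m×m}, let N_j := {i : L_{ij} ≠ 0} denote the support of the j-th column of L, and let σ be a permutation of {1,…,m} with L_{j, σ(j)} ≠ 0 for all j (i.e., j ∈ N_{σ(j)}). Let 𝒮 be a collection of subsets of {1,…,m} satisfying: for every j ∈ {1,…,m}, the union of all S ∈ 𝒮 with j ∉ S equals {1,…,m} \ {j}. If for every S ∈ 𝒮 and every j ∈ {1,…,m} with j ∉ S one has S ∩ N_{σ(j)} = ∅, then N_{σ(j)} = {j} for every j; consequently every column of L has exactly one nonzero entry and L = D Π for some invertible diagonal matrix D ∈ ℝ^{m×m} and permutation matrix Π ∈ ℝ^{m×m}. -/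
import Mathlib


open Set

/-- A matrix is a permutation matrix if it is obtained from a permutation `τ`
by putting a `1` in entry `(i, τ i)` and `0` elsewhere. -/
def IsPermMatrix {m : ℕ} (P : Matrix (Fin m) (Fin m) ℝ) : Prop :=
  ∃ τ : Equiv.Perm (Fin m), P = Matrix.of fun i j => if τ i = j then (1 : ℝ) else 0

/-- **Combinatorial core of the disentanglement argument.**
Let `N j` be the support of the `j`-th column of `L`, let `σ` be a permutation with
`L_{j, σ(j)} ≠ 0` for all `j`, and let `𝒮` be a collection of subsets of `{1,…,m}` such
that for every `j`, the union of all `S ∈ 𝒮` with `j ∉ S` equals `{1,…,m} \ {j}`.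
If for every `S ∈ 𝒮` and every `j ∉ S` one has `S ∩ N (σ j) = ∅`, then `N (σ j) = {j}`
for every `j`; consequently every column of `L` has exactly one nonzero entry and
`L = D Π` for some invertible diagonal matrix `D` and permutation matrix `Π`. -/
theorem column_supports_force_scaled_permutation {m : ℕ}
    (L : Matrix (Fin m) (Fin m) ℝ)
    (N : Fin m → Set (Fin m)) (hN : ∀ j, N j = {i | L i j ≠ 0})
    (σ : Equiv.Perm (Fin m)) (hσ : ∀ j, L j (σ j) ≠ 0)
    (𝒮 : Set (Set (Fin m)))
    (h𝒮 : ∀ j : Fin m, (⋃ S ∈ {S ∈ 𝒮 | j ∉ S}, S) = ({j}ᶜ : Set (Fin m)))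
    (hdisj : ∀ S ∈ 𝒮, ∀ j : Fin m, j ∉ S → S ∩ N (σ j) = ∅) :
    (∀ j, N (σ j) = {j}) ∧
      (∀ j : Fin m, ∃! i : Fin m, L i j ≠ 0) ∧
      ∃ (D Pmat : Matrix (Fin m) (Fin m) ℝ),
        D.IsDiag ∧ IsUnit D.det ∧ IsPermMatrix Pmat ∧ L = D * Pmat := by
  have hsupp : ∀ j, N (σ j) = {j} := by
    intro j
    apply Set.eq_singleton_iff_unique_mem.mpr
    constructor
    · rw [hN]; exact hσ j
    · intro i hi
      by_contra hij
      have : i ∈ ({j}ᶜ : Set (Fin m)) := by simpa using hij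
      rw [← h𝒮 j] at this
      simp only [Set.mem_iUnion] at this
      obtain ⟨S, ⟨hS𝒮, hjS⟩, hiS⟩ := this
      have := hdisj S hS𝒮 j hjS
      exact absurd (Set.mem_inter hiS hi) (by rw [this]; exact notMem_empty i)
  have hcol : ∀ i j : Fin m, L i j ≠ 0 ↔ i = σ.symm j := by
    intro i j
    have : N j = {σ.symm j} := by
      have := hsupp (σ.symm j); rwa [Equiv.apply_symm_apply] at this
    constructor
    · intro h
      have : i ∈ N j := by rw [hN]; exact h
      rw [‹N j = _›] at this; exact this
    · rintro rfl
      have : σ.symm j ∈ N j := by rw [‹N j = _›]; exact rfl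
      rwa [hN] at this
  refine ⟨hsupp, fun j => ⟨σ.symm j, (hcol _ _).mpr rfl, fun i h => (hcol _ _).mp h⟩, ?_⟩
  refine ⟨Matrix.diagonal (fun i => L i (σ i)),
    Matrix.of fun i j => if σ i = j then (1 : ℝ) else 0,
    Matrix.isDiag_diagonal _, ?_, ⟨σ, rfl⟩, ?_⟩
  · rw [Matrix.det_diagonal]
    exact (Finset.prod_ne_zero_iff.mpr fun i _ => hσ i).isUnit
  · ext i j
    rw [Matrix.mul_apply]
    rw [Finset.sum_eq_single i]
    · simp only [Matrix.diagonal_apply_eq, Matrix.of_apply]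
      by_cases h : σ i = j
      · subst h; simp
      · simp only [h, if_false, mul_zero]
        by_contra hne
        have := (hcol i j).mp hne
        exact h (by rw [this, Equiv.apply_symm_apply])
    · intro b _ hb
      simp [Matrix.diagonal_apply_ne _ hb.symm]
    · simp
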